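/- arXiv:1806.07075 — 4 statements merged into one kernel-verified Lean document; each statement's English description precedes it below -/
import Mathlib

section
/- Let S be a monoid, let r_h be a Hoehnke radical of S-acts, and let r_k be a Kurosh-Amitsur radical with R_{r_k} = R_{r_h}. Then r_k ≤ r for every Hoehnke radical r with R_r = R_{r_h}; hence r_k is the least element of the set of Hoehnke radicals whose radical class equals R_{r_h}, i.e., r_k = ⋀{r : r a Hoehnke radical with R_r = R_{r_h}}. -/
universe u

/-- A (left) `S`-act: a type equipped with a monoid action of `S`. -/
structure SAct (S : Type u) [Monoid S] where
  carrier : Type u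
  [mulAction : MulAction S carrier]

attribute [instance] SAct.mulAction

namespace SAct

variable {S : Type u} [Monoid S]

/-- A homomorphism of `S`-acts. -/
def IsHom (A B : SAct S) (f : A.carrier → B.carrier) : Prop :=
  ∀ (s : S) (a : A.carrier), f (s • a) = s • f a

/-- A homomorphism is trivial if its image has at most one element. -/
def IsTrivialHom {A B : SAct S} (f : A.carrier → B.carrier) : Prop :=
  (Set.range f).Subsingleton

/-- Two `S`-acts are isomorphic if there is a bijective homomorphism between them. -/
def AreIso (A B : SAct S) : Prop :=
  ∃ f : A.carrier → B.carrier, IsHom A B f ∧ Function.Bijective f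

/-- A subset of an `S`-act is a subact if it is closed under the action. -/
def IsSubact (A : SAct S) (B : Set A.carrier) : Prop :=
  ∀ (s : S), ∀ a ∈ B, s • a ∈ B

/-- The `S`-act induced on a subact. -/
def sub (A : SAct S) (B : Set A.carrier) (h : IsSubact A B) : SAct S where
  carrier := ↥B
  mulAction :=
    { smul := fun s b => ⟨s • (b : A.carrier), h s b b.2⟩
      one_smul := fun b => Subtype.ext (one_smul S (b : A.carrier))
      mul_smul := fun s t b => Subtype.ext (mul_smul s t (b : A.carrier)) }

/-- A congruence on an `S`-act: an equivalence relation compatible with the action. -/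
def IsActCon (A : SAct S) (ρ : Setoid A.carrier) : Prop :=
  ∀ (s : S) (a a' : A.carrier), ρ a a' → ρ (s • a) (s • a')

/-- The quotient `S`-act of an `S`-act by a congruence. -/
def quot (A : SAct S) (ρ : Setoid A.carrier) (h : IsActCon A ρ) : SAct S where
  carrier := Quotient ρ
  mulAction :=
    { smul := fun s => Quotient.map (fun a => s • a) (fun a b hab => h s a b hab)
      one_smul := fun q => Quotient.inductionOn q (fun a => by
        show Quotient.map (fun a => (1 : S) • a) _ (Quotient.mk ρ a) = Quotient.mk ρ a
        rw [Quotient.map_mk, one_smul])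
      mul_smul := fun s t q => Quotient.inductionOn q (fun a => by
        show Quotient.map (fun a => (s * t) • a) _ (Quotient.mk ρ a)
            = Quotient.map (fun a => s • a) _ (Quotient.map (fun a => t • a) _ (Quotient.mk ρ a))
        rw [Quotient.map_mk, Quotient.map_mk, Quotient.map_mk, mul_smul]) }

/-- A system of pairwise disjoint non-trivial subacts of an `S`-act. -/
def IsSystem (A : SAct S) (Sys : Set (Set A.carrier)) : Prop :=
  (∀ B ∈ Sys, IsSubact A B ∧ ¬ B.Subsingleton) ∧
    (∀ B ∈ Sys, ∀ C ∈ Sys, B ≠ C → ∀ a ∈ B, a ∉ C)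

/-- The Rees congruence determined by a system of pairwise disjoint
non-trivial subacts: `a` and `b` are related iff `a = b` or `a` and `b`
lie in a common member of the system. -/
def reesSetoid (A : SAct S) (Sys : Set (Set A.carrier)) (hSys : IsSystem A Sys) :
    Setoid A.carrier where
  r a b := a = b ∨ ∃ B ∈ Sys, a ∈ B ∧ b ∈ B
  iseqv :=
    { refl := fun _ => Or.inl rfl
      symm := by
        rintro a b (rfl | ⟨B, hB, ha, hb⟩)
        · exact Or.inl rfl
        · exact Or.inr ⟨B, hB, hb, ha⟩
      trans := by
        rintro a b c (rfl | ⟨B, hB, ha, hb⟩) h2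
        · exact h2
        · rcases h2 with rfl | ⟨C, hC, hb', hc⟩
          · exact Or.inr ⟨B, hB, ha, hb⟩
          · by_cases hBC : B = C
            · exact Or.inr ⟨B, hB, ha, hBC ▸ hc⟩
            · exact absurd hb' (hSys.2 B hB C hC hBC b hb) }

/-- A Rees congruence is a congruence. -/
theorem reesSetoid_isActCon (A : SAct S) (Sys : Set (Set A.carrier)) (hSys : IsSystem A Sys) :
    IsActCon A (reesSetoid A Sys hSys) := by
  rintro s a a' (rfl | ⟨B, hB, ha, ha'⟩)
  · exact Or.inl rfl
  · exact Or.inr ⟨B, hB, (hSys.1 B hB).1 s a ha, (hSys.1 B hB).1 s a' ha'⟩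

/-- The system of non-singleton classes of a congruence (for a Rees congruence,
this is its system `Σ_ρ` of non-trivial subacts). -/
def nsClasses (A : SAct S) (ρ : Setoid A.carrier) : Set (Set A.carrier) :=
  {C | (∃ a, C = {x | ρ x a}) ∧ ¬ C.Subsingleton}

/-- A congruence is a Rees congruence if it arises from a system of pairwise
disjoint non-trivial subacts. -/
def IsRees (A : SAct S) (ρ : Setoid A.carrier) : Prop :=
  ∃ (Sys : Set (Set A.carrier)) (hSys : IsSystem A Sys), ρ = reesSetoid A Sys hSys

end SAct

open SAct

/-- A (normal) Hoehnke radical: an assignment of a congruence `rad A` to every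
`S`-act `A`, functorial with respect to homomorphisms, and with
`rad (A / rad A) = Δ`. -/
structure HoehnkeRadical (S : Type u) [Monoid S] where
  rad : (A : SAct S) → Setoid A.carrier
  isCon : ∀ A : SAct S, IsActCon A (rad A)
  functorial : ∀ {A B : SAct S} (f : A.carrier → B.carrier), IsHom A B f →
    ∀ a a' : A.carrier, rad A a a' → rad B (f a) (f a')
  rad_quot : ∀ A : SAct S, rad (A.quot (rad A) (isCon A)) = ⊥

namespace HoehnkeRadical

variable {S : Type u} [Monoid S]

/-- The radical class `R_r = {A : r(A) = ∇_A}` of a Hoehnke radical. -/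
def radClass (r : HoehnkeRadical S) : Set (SAct S) := {A | r.rad A = ⊤}

/-- The semisimple class `S_r = {A : r(A) = Δ_A}` of a Hoehnke radical. -/
def ssClass (r : HoehnkeRadical S) : Set (SAct S) := {A | r.rad A = ⊥}

/-- The pointwise order on Hoehnke radicals. -/
def le (r r' : HoehnkeRadical S) : Prop := ∀ A : SAct S, r.rad A ≤ r'.rad A

end HoehnkeRadical

/-- A Kurosh-Amitsur radical: a Hoehnke radical such that (i) every `rad A` is a
Rees congruence, (ii) every member of `Σ_{rad A}` is in the radical class, and
(iii) every system of pairwise disjoint non-trivial subacts belonging to the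
radical class is below `Σ_{rad A}`. -/
structure KARadical (S : Type u) [Monoid S] extends HoehnkeRadical S where
  rees : ∀ A : SAct S, IsRees A (rad A)
  cls_rad : ∀ A : SAct S, ∀ B ∈ nsClasses A (rad A), ∀ h : IsSubact A B,
    A.sub B h ∈ toHoehnkeRadical.radClass
  maximal : ∀ (A : SAct S) (Sys : Set (Set A.carrier)), IsSystem A Sys →
    (∀ B ∈ Sys, ∀ h : IsSubact A B, A.sub B h ∈ toHoehnkeRadical.radClass) →
    ∀ B ∈ Sys, ∃ C ∈ nsClasses A (rad A), B ⊆ C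

/-- A torsion theory: a pair `(T, F)` of classes of `S`-acts, each closed under
isomorphism and containing all trivial acts, such that (1) every homomorphism
from a member of `T` to a member of `F` is trivial, (2) `T` contains every act
all of whose homomorphisms into members of `F` are trivial, and (3) `F`
contains every act all of whose homomorphisms from members of `T` are trivial. -/
structure IsTorsionTheory {S : Type u} [Monoid S] (T F : Set (SAct S)) : Prop where
  iso_T : ∀ A B : SAct S, AreIso A B → A ∈ T → B ∈ T
  iso_F : ∀ A B : SAct S, AreIso A B → A ∈ F → B ∈ F
  trivial_T : ∀ A : SAct S, Subsingleton A.carrier → A ∈ T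
  trivial_F : ∀ A : SAct S, Subsingleton A.carrier → A ∈ F
  hom_trivial : ∀ A ∈ T, ∀ B ∈ F, ∀ f : A.carrier → B.carrier,
    IsHom A B f → IsTrivialHom (A := A) (B := B) f
  mem_T : ∀ A : SAct S,
    (∀ B ∈ F, ∀ f : A.carrier → B.carrier, IsHom A B f → IsTrivialHom (A := A) (B := B) f) →
    A ∈ T
  mem_F : ∀ B : SAct S,
    (∀ A ∈ T, ∀ f : A.carrier → B.carrier, IsHom A B f → IsTrivialHom (A := A) (B := B) f) →
    B ∈ F

/-- The product of a family of `S`-acts. -/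
def prodAct {S : Type u} [Monoid S] (ι : Type u) (f : ι → SAct S) : SAct S where
  carrier := ∀ i, (f i).carrier
  mulAction := inferInstance

/-- The Hoehnke radical `r_C` determined by a class `C` closed under subacts and
products: the meet of all congruences whose quotient lies in `C`. -/
def radC {S : Type u} [Monoid S] (C : Set (SAct S)) (A : SAct S) : Setoid A.carrier :=
  sInf {χ : Setoid A.carrier | ∃ h : IsActCon A χ, A.quot χ h ∈ C}

/-- The radical class `R_{r_C}` of the Hoehnke radical `r_C`. -/
def RradC {S : Type u} [Monoid S] (C : Set (SAct S)) : Set (SAct S) :=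
  {A | radC C A = ⊤}

namespace SAct

variable {S : Type u} [Monoid S]

theorem isHom_subtype_val (A : SAct S) (B : Set A.carrier) (h : IsSubact A B) :
    IsHom (A.sub B h) A Subtype.val :=
  fun _ _ => rfl

theorem reesSetoid_apply_iff_mem {A : SAct S} {Sys : Set (Set A.carrier)} (hSys : IsSystem A Sys)
    {B : Set A.carrier} (hB : B ∈ Sys) {a : A.carrier} (ha : a ∈ B) (x : A.carrier) :
    reesSetoid A Sys hSys x a ↔ x ∈ B := by
  constructor
  · rintro (rfl | ⟨C, hC, hxC, haC⟩)
    · exact ha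
    · by_cases hCB : C = B
      · exact hCB ▸ hxC
      · exact absurd ha (hSys.2 C hC B hB hCB a haC)
  · exact fun hx => Or.inr ⟨B, hB, hx, ha⟩

theorem mem_nsClasses_reesSetoid {A : SAct S} {Sys : Set (Set A.carrier)} (hSys : IsSystem A Sys)
    {B : Set A.carrier} (hB : B ∈ Sys) {a : A.carrier} (ha : a ∈ B) :
    B ∈ nsClasses A (reesSetoid A Sys hSys) :=
  ⟨⟨a, Set.ext fun x => (reesSetoid_apply_iff_mem hSys hB ha x).symm⟩, (hSys.1 B hB).2⟩

theorem IsRees.eq_or_exists_mem_nsClasses {A : SAct S} {ρ : Setoid A.carrier} (hρ : IsRees A ρ)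
    {a a' : A.carrier} (h : ρ a a') :
    a = a' ∨ ∃ B ∈ nsClasses A ρ, IsSubact A B ∧ a ∈ B ∧ a' ∈ B := by
  obtain ⟨Sys, hSys, rfl⟩ := hρ
  rcases h with rfl | ⟨B, hB, ha, ha'⟩
  · exact Or.inl rfl
  · exact Or.inr ⟨B, mem_nsClasses_reesSetoid hSys hB ha, (hSys.1 B hB).1, ha, ha'⟩

end SAct

namespace HoehnkeRadical

variable {S : Type u} [Monoid S]

theorem rad_of_sub_mem_radClass {r : HoehnkeRadical S} {A : SAct S} {B : Set A.carrier}
    (hB : IsSubact A B) (hrad : A.sub B hB ∈ r.radClass) {a a' : A.carrier}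
    (ha : a ∈ B) (ha' : a' ∈ B) : r.rad A a a' := by
  have htop : r.rad (A.sub B hB) = ⊤ := hrad
  exact r.functorial (A := A.sub B hB) (B := A) Subtype.val (isHom_subtype_val A B hB)
    ⟨a, ha⟩ ⟨a', ha'⟩ (by rw [htop]; trivial)

end HoehnkeRadical

namespace KARadical

variable {S : Type u} [Monoid S]

/-- Each non-singleton class of `rk.rad A` is a subact in the radical class of `rk`, hence of `r`;
so `r` relates any two of its elements, and by functoriality along the inclusion so does `r.rad A`. -/
theorem le_of_radClass_subset (rk : KARadical S) {r : HoehnkeRadical S}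
    (h : rk.radClass ⊆ r.radClass) : rk.le r := by
  intro A a a' haa'
  rcases (rk.rees A).eq_or_exists_mem_nsClasses haa' with rfl | ⟨B, hBcls, hB, ha, ha'⟩
  · exact (r.rad A).refl a
  · exact r.rad_of_sub_mem_radClass hB (h (rk.cls_rad A B hBcls hB)) ha ha'

end KARadical

theorem KA_radical_is_least_with_same_radical_class (S : Type u) [Monoid S]
    (rh : HoehnkeRadical S) (rk : KARadical S)
    (hR : rk.toHoehnkeRadical.radClass = rh.radClass) :
    ∀ r : HoehnkeRadical S, r.radClass = rh.radClass → rk.toHoehnkeRadical.le r :=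
  fun _ hr => rk.le_of_radClass_subset (hR.trans hr.symm).le
end

section
/- Let S be a monoid and let r be a Hoehnke radical of S-acts satisfying: (i) r(A) is a Rees congruence for every S-act A, and (ii) r(B) = ∇_B for every B ∈ Σ_{r(A)}. Then r also satisfies (iii): for every S-act A and every system Σ of pairwise disjoint non-trivial subacts of A all belonging to R_r, every member of Σ is contained in some member of Σ_{r(A)}. Hence r is a Kurosh-Amitsur radical. -/
universe u

open SAct

theorem KA_third_condition_redundant (S : Type u) [Monoid S]
    (r : HoehnkeRadical S)
    (hrees : ∀ A : SAct S, IsRees A (r.rad A))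
    (hcls : ∀ A : SAct S, ∀ B ∈ nsClasses A (r.rad A), ∀ h : IsSubact A B,
      A.sub B h ∈ r.radClass) :
    (∀ (A : SAct S) (Sys : Set (Set A.carrier)), IsSystem A Sys →
      (∀ B ∈ Sys, ∀ h : IsSubact A B, A.sub B h ∈ r.radClass) →
      ∀ B ∈ Sys, ∃ C ∈ nsClasses A (r.rad A), B ⊆ C) ∧
    ∃ k : KARadical S, k.toHoehnkeRadical = r := by
  have main : ∀ (A : SAct S) (Sys : Set (Set A.carrier)), IsSystem A Sys →
      (∀ B ∈ Sys, ∀ h : IsSubact A B, A.sub B h ∈ r.radClass) →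
      ∀ B ∈ Sys, ∃ C ∈ nsClasses A (r.rad A), B ⊆ C := by
    intro A Sys hSys hrad B hB
    obtain ⟨hsub, hnt⟩ := hSys.1 B hB
    have htop := hrad B hB hsub
    -- the inclusion is a hom
    have hhom : IsHom (A.sub B hsub) A (Subtype.val) := fun s a => rfl
    -- any two elements of B are rad-A-related
    have key : ∀ b ∈ B, ∀ b' ∈ B, r.rad A b b' := by
      intro b hb b' hb'
      have : r.rad (A.sub B hsub) ⟨b, hb⟩ ⟨b', hb'⟩ := by
        rw [htop]; trivial
      exact r.functorial Subtype.val hhom _ _ this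
    rw [Set.not_subsingleton_iff] at hnt
    obtain ⟨b0, hb0⟩ := hnt.nonempty
    refine ⟨{x | r.rad A x b0}, ⟨⟨b0, rfl⟩, ?_⟩, ?_⟩
    · intro hss
      apply hnt.not_subsingleton
      intro x hx y hy
      exact hss (key x hx b0 hb0) (key y hy b0 hb0)
    · intro x hx
      exact key x hx b0 hb0
  refine ⟨main, ⟨⟨r, hrees, hcls, main⟩, rfl⟩⟩
end

section
/- Let S be a monoid, let r_h be a Hoehnke radical of S-acts, and let r_k be a Kurosh-Amitsur radical with R_{r_k} = R_{r_h}. Then for every Kurosh-Amitsur radical r: r ≤ r_h if and only if r ≤ r_k. (This is the reflection property exhibiting the poset of Kurosh-Amitsur radicals as a reflective subcategory of the poset of Hoehnke radicals via r_h ↦ r_k.) -/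
universe u

open SAct

/-! A Kurosh-Amitsur radical `r` is controlled by its radical class: the classes of the Rees
congruence `r(A)` are subacts lying in `R_r`, while any Hoehnke radical `r'` collapses every subact
lying in `R_{r'}` (push `∇` forward along the inclusion). Hence `r ≤ r'` iff `R_r ⊆ R_{r'}`, a
condition that sees `r'` only through its radical class, and `R_{r_h} = R_{r_k}`. -/

namespace SAct

variable {S : Type u} [Monoid S]

theorem reesSetoid_class_eq {A : SAct S} {Sys : Set (Set A.carrier)} (hSys : IsSystem A Sys)
    {B : Set A.carrier} (hB : B ∈ Sys) {a : A.carrier} (ha : a ∈ B) :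
    {x | reesSetoid A Sys hSys x a} = B := by
  ext x
  refine ⟨?_, fun hx => Or.inr ⟨B, hB, hx, ha⟩⟩
  rintro (rfl | ⟨C, hC, hxC, haC⟩)
  · exact ha
  · by_cases hCB : C = B
    · exact hCB ▸ hxC
    · exact absurd ha (hSys.2 C hC B hB hCB a haC)

end SAct

namespace HoehnkeRadical

variable {S : Type u} [Monoid S]

theorem radClass_subset_of_le {r r' : HoehnkeRadical S} (hle : r.le r') :
    r.radClass ⊆ r'.radClass :=
  fun A hA => top_le_iff.mp (hA ▸ hle A)

theorem rad_of_mem_sub_radClass (r : HoehnkeRadical S) {A : SAct S} {B : Set A.carrier}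
    (hB : IsSubact A B) (hrad : A.sub B hB ∈ r.radClass) {a a' : A.carrier}
    (ha : a ∈ B) (ha' : a' ∈ B) : r.rad A a a' := by
  have hincl : IsHom (A.sub B hB) A Subtype.val := fun _ _ => rfl
  have hrel : r.rad (A.sub B hB) ⟨a, ha⟩ ⟨a', ha'⟩ := by
    rw [show r.rad (A.sub B hB) = ⊤ from hrad]
    trivial
  exact r.functorial Subtype.val hincl _ _ hrel

end HoehnkeRadical

namespace KARadical

variable {S : Type u} [Monoid S]

theorem eq_or_mem_radical_subact (r : KARadical S) {A : SAct S} {a a' : A.carrier}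
    (h : r.rad A a a') :
    a = a' ∨ ∃ (B : Set A.carrier) (hB : IsSubact A B),
      A.sub B hB ∈ r.toHoehnkeRadical.radClass ∧ a ∈ B ∧ a' ∈ B := by
  obtain ⟨Sys, hSys, hEq⟩ := r.rees A
  rw [hEq] at h
  refine h.imp id fun ⟨B, hB, ha, ha'⟩ => ⟨B, (hSys.1 B hB).1, ?_, ha, ha'⟩
  have hclass : B ∈ nsClasses A (r.rad A) :=
    ⟨⟨a, by rw [hEq, SAct.reesSetoid_class_eq hSys hB ha]⟩, (hSys.1 B hB).2⟩
  exact r.cls_rad A B hclass _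

theorem le_iff_radClass_subset (r : KARadical S) (r' : HoehnkeRadical S) :
    r.toHoehnkeRadical.le r' ↔ r.toHoehnkeRadical.radClass ⊆ r'.radClass := by
  refine ⟨HoehnkeRadical.radClass_subset_of_le, fun hsub A a a' h => ?_⟩
  rcases r.eq_or_mem_radical_subact h with rfl | ⟨B, hB, hrad, ha, ha'⟩
  · exact (r'.rad A).refl a
  · exact r'.rad_of_mem_sub_radClass hB (hsub hrad) ha ha'

end KARadical

theorem KA_reflection_property (S : Type u) [Monoid S]
    (rh : HoehnkeRadical S) (rk : KARadical S)
    (hR : rk.toHoehnkeRadical.radClass = rh.radClass) :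
    ∀ r : KARadical S,
      r.toHoehnkeRadical.le rh ↔ r.toHoehnkeRadical.le rk.toHoehnkeRadical := by
  intro r
  rw [r.le_iff_radClass_subset, r.le_iff_radClass_subset, hR]
end

section
/- Let S be a monoid and let r and r' be Kurosh-Amitsur radicals of S-acts. If R_r ⊆ R_{r'}, then r ≤ r', i.e., r(A) ⊆ r'(A) for every S-act A. -/
universe u

open SAct

theorem KA_radical_class_subset_implies_le (S : Type u) [Monoid S]
    (r r' : KARadical S)
    (h : r.toHoehnkeRadical.radClass ⊆ r'.toHoehnkeRadical.radClass) :
    ∀ A : SAct S, r.rad A ≤ r'.rad A := by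
  intro A
  obtain ⟨Sys, hSys, hEq⟩ := r.rees A
  set ρ := r.toHoehnkeRadical.rad A with hρ
  -- every non-singleton class of ρ is in Sys
  have classmem : ∀ B ∈ nsClasses A ρ, B ∈ Sys := by
    rintro B ⟨⟨b, rfl⟩, hns⟩
    rw [Set.not_subsingleton_iff] at hns
    obtain ⟨x, hx, y, hy, hxy⟩ := hns
    have key : ∃ z, z ≠ b ∧ ρ z b := by
      by_cases hxb : x = b
      · exact ⟨y, fun hyb => hxy (hxb.trans hyb.symm), hy⟩
      · exact ⟨x, hxb, hx⟩
    obtain ⟨z, hzb, hz⟩ := key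
    have hz' : z = b ∨ ∃ B' ∈ Sys, z ∈ B' ∧ b ∈ B' := by
      rw [hEq] at hz; exact hz
    rcases hz' with rfl | ⟨B', hB', hzB', hbB'⟩
    · exact absurd rfl hzb
    have : {x | ρ x b} = B' := by
      ext w
      constructor
      · intro hw
        have hw' : w = b ∨ ∃ C ∈ Sys, w ∈ C ∧ b ∈ C := by rw [hEq] at hw; exact hw
        rcases hw' with rfl | ⟨C, hC, hwC, hbC⟩
        · exact hbB'
        · by_cases hCB : C = B'
          · exact hCB ▸ hwC
          · exact absurd hbB' (hSys.2 C hC B' hB' hCB b hbC)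
      · intro hw
        show ρ w b
        rw [hEq]
        exact Or.inr ⟨B', hB', hw, hbB'⟩
    rw [this]; exact hB'
  -- nsClasses A ρ is a system
  have hsysNs : IsSystem A (nsClasses A ρ) := by
    constructor
    · intro B hB
      exact ⟨(hSys.1 B (classmem B hB)).1, hB.2⟩
    · rintro B ⟨⟨b, rfl⟩, _⟩ C ⟨⟨c, rfl⟩, _⟩ hBC a ha hac
      apply hBC
      have hbc : ρ b c := Setoid.trans (Setoid.symm ha) hac
      ext w
      constructor
      · intro hw; exact Setoid.trans hw hbc
      · intro hw; exact Setoid.trans hw (Setoid.symm hbc)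
  have hmax := r'.maximal A (nsClasses A ρ) hsysNs
    (fun B hB hsub => h (r.cls_rad A B hB hsub))
  rw [Setoid.le_def]
  intro a a' haa'
  by_cases hne : a = a'
  · exact hne ▸ (r'.toHoehnkeRadical.rad A).iseqv.refl _
  · have hBmem : {x | ρ x a'} ∈ nsClasses A ρ := by
      refine ⟨⟨a', rfl⟩, ?_⟩
      rw [Set.not_subsingleton_iff]
      exact ⟨a, haa', a', Setoid.refl _, hne⟩
    obtain ⟨C, hC, hsub⟩ := hmax _ hBmem
    obtain ⟨⟨c, rfl⟩, _⟩ := hC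
    have h1 : r'.toHoehnkeRadical.rad A a c := hsub haa'
    have h2 : r'.toHoehnkeRadical.rad A a' c := hsub (Setoid.refl _)
    exact (r'.toHoehnkeRadical.rad A).iseqv.trans h1 ((r'.toHoehnkeRadical.rad A).iseqv.symm h2)
end
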